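/- Let $D$ be a balanced bipartite digraph on $2a$ vertices with partite sets $V_1, V_2$ of size $a$. If $D$ contains a cycle factor $C_1, \ldots, C_s$ with $s \ge 2$ such that no two of the cycles can be merged into a single cycle on the union of their vertex sets, then for the shortest cycle $C_1$, the total number of arcs between $V(C_1)$ and $V(D) \setminus V(C_1)$ is at most $\frac{|V(C_1)| \cdot (2a - |V(C_1)|)}{2}$. -/

import Mathlib

open Finset

variable {V : Type*}

/-- Cyclic successor of `x` on the cycle represented by list `c`. -/
def cycNext [DecidableEq V] (c : List V) (x : V) : V :=
  c.getD ((c.idxOf x + 1) % c.length) x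

/-- `c` is a directed cycle of the digraph with arc relation `A`. -/
def IsDicycle [DecidableEq V] (A : V → V → Prop) (c : List V) : Prop :=
  2 ≤ c.length ∧ c.Nodup ∧ ∀ x ∈ c, A x (cycNext c x)

/-- The digraph has a hamiltonian (directed) cycle. -/
def IsHamiltonian [DecidableEq V] (A : V → V → Prop) : Prop :=
  ∃ c : List V, IsDicycle A c ∧ ∀ v, v ∈ c

/-- `p` is a hamiltonian directed path. -/
def IsHamDipath (A : V → V → Prop) (p : List V) : Prop :=
  p.Nodup ∧ p.Chain' A ∧ ∀ v, v ∈ p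

/-- The digraph has a hamiltonian directed path. -/
def IsTraceable (A : V → V → Prop) : Prop := ∃ p, IsHamDipath A p

/-- The digraph has a cycle factor: vertex-disjoint dicycles covering all vertices. -/
def HasCycleFactor [DecidableEq V] (A : V → V → Prop) : Prop :=
  ∃ L : List (List V), (∀ c ∈ L, IsDicycle A c) ∧
    L.Pairwise (fun c d => ∀ x ∈ c, x ∉ d) ∧ ∀ v, ∃ c ∈ L, v ∈ c

/-- `V₁, V₂` form a bipartition of the digraph into independent sets. -/
def IsBipartition [DecidableEq V] [Fintype V] (A : V → V → Prop) (V₁ V₂ : Finset V) : Prop :=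
  Disjoint V₁ V₂ ∧ V₁ ∪ V₂ = Finset.univ ∧
    (∀ x ∈ V₁, ∀ y ∈ V₁, ¬ A x y) ∧ (∀ x ∈ V₂, ∀ y ∈ V₂, ¬ A x y)

/-- total degree (out-degree plus in-degree) of `v`. -/
def deg [Fintype V] (A : V → V → Prop) [DecidableRel A] (v : V) : ℕ :=
  (Finset.univ.filter (fun y => A v y)).card + (Finset.univ.filter (fun y => A y v)).card

/-- number of arcs (in both directions) between `v` and the set `X`. -/
def degIn (A : V → V → Prop) [DecidableRel A] (X : Finset V) (v : V) : ℕ :=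
  (X.filter (fun y => A v y)).card + (X.filter (fun y => A y v)).card

/-- total number of arcs between `X` and `Y`, in both directions. -/
def arcsBetween (A : V → V → Prop) [DecidableRel A] (X Y : Finset V) : ℕ :=
  ((X ×ˢ Y).filter (fun p => A p.1 p.2)).card + ((Y ×ˢ X).filter (fun p => A p.1 p.2)).card

/-- strong connectivity. -/
def IsStrong (A : V → V → Prop) : Prop := ∀ u v, Relation.ReflTransGen A u v

/-- `N⁺(S)`: out-neighbourhood of a set. -/
def outNbrs [Fintype V] [DecidableEq V] (A : V → V → Prop) [DecidableRel A]
    (S : Finset V) : Finset V :=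
  Finset.univ.filter (fun y => ∃ v ∈ S, A v y)

/-- a perfect matching from `X` to `Y` using arcs of the digraph. -/
def HasPerfectMatching (A : V → V → Prop) (X Y : Finset V) : Prop :=
  ∃ f : V → V, Set.InjOn f X ∧ ∀ x ∈ X, f x ∈ Y ∧ A x (f x)

/-- a matching from `V₁` to `V₂`: a set of pairwise independent arcs. -/
def IsMatching (A : V → V → Prop) (V₁ V₂ : Finset V) (M : Finset (V × V)) : Prop :=
  (∀ p ∈ M, p.1 ∈ V₁ ∧ p.2 ∈ V₂ ∧ A p.1 p.2) ∧
  (∀ p ∈ M, ∀ q ∈ M, p ≠ q → p.1 ≠ q.1 ∧ p.2 ≠ q.2)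

/-- the digraph (with arc relation `A`) is a member of the family `𝓗₁`,
with partite sets `S ∪ R` and `U ∪ W`. -/
def IsH1 [DecidableEq V] [Fintype V] (A : V → V → Prop) [DecidableRel A] (a : ℕ)
    (S R U W : Finset V) : Prop :=
  Odd a ∧ 3 ≤ a ∧
  Disjoint S R ∧ Disjoint U W ∧ Disjoint (S ∪ R) (U ∪ W) ∧
  S ∪ R ∪ U ∪ W = Finset.univ ∧
  S.card = (a + 1) / 2 ∧ W.card = (a + 1) / 2 ∧
  U.card = (a - 1) / 2 ∧ R.card = (a - 1) / 2 ∧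
  (∀ x ∈ S ∪ R, ∀ y ∈ S ∪ R, ¬ A x y) ∧
  (∀ x ∈ U ∪ W, ∀ y ∈ U ∪ W, ¬ A x y) ∧
  (∀ r ∈ R, ∀ w ∈ W, A r w ∧ A w r) ∧
  (∀ u ∈ U, ∀ s ∈ S, A u s ∧ A s u) ∧
  (∀ w ∈ W, ∀ s ∈ S, A w s) ∧
  (∀ s ∈ S, ∀ w ∈ W, ¬ A s w) ∧
  (∃ u ∈ U, ∃ r ∈ R, A u r) ∧
  (∀ r ∈ R, (a - 3) / 2 ≤ degIn A U r) ∧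
  (∀ u ∈ U, (a - 3) / 2 ≤ degIn A R u)

/-- the digraph (with arc relation `A`) is the digraph `H₃`,
with partite sets `S ∪ R` and `U ∪ W`. -/
def IsH3 [DecidableEq V] [Fintype V] (A : V → V → Prop) [DecidableRel A] (a : ℕ)
    (S R U W : Finset V) : Prop :=
  Even a ∧ 4 ≤ a ∧
  Disjoint S R ∧ Disjoint U W ∧ Disjoint (S ∪ R) (U ∪ W) ∧
  S ∪ R ∪ U ∪ W = Finset.univ ∧
  S.card = (a + 2) / 2 ∧ W.card = (a + 2) / 2 ∧
  U.card = (a - 2) / 2 ∧ R.card = (a - 2) / 2 ∧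
  (∀ x ∈ S ∪ R, ∀ y ∈ S ∪ R, ¬ A x y) ∧
  (∀ x ∈ U ∪ W, ∀ y ∈ U ∪ W, ¬ A x y) ∧
  (∀ r ∈ R, ∀ y ∈ U ∪ W, A r y ∧ A y r) ∧
  (∀ u ∈ U, ∀ x ∈ S ∪ R, A u x ∧ A x u) ∧
  (∀ w ∈ W, ∀ s ∈ S, A w s) ∧
  (∀ s ∈ S, ∀ w ∈ W, ¬ A s w)

/-- the digraph `H₂` on vertices `Fin 6`, where
`x₁ = 0, x₂ = 1, x₃ = 2, y₁ = 3, y₂ = 4, y₃ = 5`. -/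
def H2Adj : Fin 6 → Fin 6 → Prop := fun u v =>
  (u, v) ∈ ([(0,4),(4,2),(2,5),(5,0),(1,4),(4,1),(1,5),(5,1),(3,0),(0,3),(3,2),(2,3)] :
    List (Fin 6 × Fin 6))

instance : DecidableRel H2Adj := fun u v => by unfold H2Adj; infer_instance


/-!
Let `p⁺`, `q⁺` be the successor permutations of two disjoint cycles `p`, `q` of the factor.
Reindexing by these permutations, the arcs from `p` to `q` correspond to the pairs
`(u, v) ∈ p × q` with `u → q⁺ v`, and the arcs from `q` to `p` to the pairs with `v → p⁺ u`.
No pair is of both kinds, since otherwise `u → q⁺ v ⋯ v → p⁺ u ⋯ u` would be a cycle on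
`V(p) ∪ V(q)`. In a bipartite digraph both kinds of pairs have `u` and `v` on the same side, and
as `q⁺` swaps the sides, exactly half of the pairs in `p × q` lie on the same side. Hence at most
`|p| |q| / 2` arcs join `p` and `q`, and summing over the cycles other than `C₁` gives the bound.
-/

theorem List.exists_isRotated_cons {α : Type*} {l : List α} {x : α} (hx : x ∈ l) :
    ∃ t, l ~r x :: t := by
  obtain ⟨s, t, rfl⟩ := List.append_of_mem hx
  exact ⟨t ++ s, List.isRotated_append⟩

theorem List.map_formPerm {α : Type*} [DecidableEq α] {l : List α} (hl : l.Nodup) :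
    l.map l.formPerm = l.rotate 1 := by
  refine List.ext_getElem (by simp) fun i hi _ => ?_
  simp [List.formPerm_apply_getElem _ hl, List.getElem_rotate]

theorem List.Pairwise.notMem_of_ne {α : Type*} {L : List (List α)}
    (h : L.Pairwise fun c d => ∀ x ∈ c, x ∉ d) {c d : List α} (hc : c ∈ L) (hd : d ∈ L)
    (hne : c ≠ d) {x : α} (hx : x ∈ c) : x ∉ d :=
  haveI : Std.Symm fun c d : List α => ∀ x ∈ c, x ∉ d := ⟨fun _ _ h x hx hx' => h x hx' hx⟩
  h.forall hc hd hne x hx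

theorem List.Pairwise.pairwiseDisjoint_toFinset {α : Type*} [DecidableEq α] {L : List (List α)}
    (h : L.Pairwise fun c d => ∀ x ∈ c, x ∉ d) :
    (L.toFinset : Set (List α)).PairwiseDisjoint List.toFinset := by
  intro c hc d hd hne
  refine Finset.disjoint_left.mpr fun x hx hx' => ?_
  exact h.notMem_of_ne (List.mem_toFinset.mp hc) (List.mem_toFinset.mp hd) hne
    (List.mem_toFinset.mp hx) (List.mem_toFinset.mp hx')

theorem Finset.card_filter_comp_perm {α : Type*} (u : Finset α) (π : Equiv.Perm α)
    (hπ : ∀ r, π r ∈ u ↔ r ∈ u) (P : α → Prop) [DecidablePred P] :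
    #(u.filter fun r => P (π r)) = #(u.filter P) :=
  card_equiv π fun r => by simp [hπ]

section Dicycle

variable [DecidableEq V] {A : V → V → Prop}

def Mergeable (A : V → V → Prop) (c d : List V) : Prop :=
  ∃ e : List V, IsDicycle A e ∧ ∀ v, v ∈ e ↔ v ∈ c ∨ v ∈ d

theorem cycNext_eq_formPerm {c : List V} (hc : c.Nodup) {x : V} (hx : x ∈ c) :
    cycNext c x = c.formPerm x := by
  obtain ⟨i, hi, rfl⟩ := List.getElem_of_mem hx
  rw [cycNext, hc.idxOf_getElem, List.formPerm_apply_getElem _ hc, List.getD_eq_getElem]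

theorem isDicycle_iff_formPerm {c : List V} :
    IsDicycle A c ↔ 2 ≤ c.length ∧ c.Nodup ∧ ∀ x ∈ c, A x (c.formPerm x) := by
  refine and_congr_right fun _ => and_congr_right fun hc => ?_
  exact forall₂_congr fun x hx => by rw [cycNext_eq_formPerm hc hx]

theorem IsDicycle.adj_formPerm {c : List V} (hc : IsDicycle A c) {x : V} (hx : x ∈ c) :
    A x (c.formPerm x) :=
  (isDicycle_iff_formPerm.mp hc).2.2 x hx

theorem IsDicycle.isRotated {c c' : List V} (hc : IsDicycle A c) (h : c ~r c') :
    IsDicycle A c' := by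
  obtain ⟨hlen, hnd, harc⟩ := isDicycle_iff_formPerm.mp hc
  refine isDicycle_iff_formPerm.mpr ⟨h.perm.length_eq ▸ hlen, h.nodup_iff.mp hnd, fun x hx => ?_⟩
  rw [← List.formPerm_eq_of_isRotated hnd h]
  exact harc x (h.mem_iff.mpr hx)

theorem isDicycle_cons_iff {x : V} {l : List V} :
    IsDicycle A (x :: l) ↔ l ≠ [] ∧ (x :: l).Nodup ∧ (x :: l ++ [x]).IsChain A := by
  rw [isDicycle_iff_formPerm, List.isChain_cons_append_singleton_iff_forall₂]
  refine and_congr (by cases l <;> simp) (and_congr_right fun hc => ?_)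
  rw [show l ++ [x] = (x :: l).rotate 1 by simp, ← List.map_formPerm hc,
    List.forall₂_map_right_iff, List.forall₂_same]

theorem Mergeable.of_isRotated {c c' d d' : List V} (h : Mergeable A c d) (hc : c ~r c')
    (hd : d ~r d') : Mergeable A c' d' := by
  obtain ⟨e, he, hmem⟩ := h
  exact ⟨e, he, fun v => by rw [hmem, hc.mem_iff, hd.mem_iff]⟩

theorem mergeable_cons_of_adj {u v : V} {l m : List V} (hp : IsDicycle A (u :: l))
    (hq : IsDicycle A (v :: m)) (hdisj : ∀ x ∈ u :: l, x ∉ v :: m)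
    (huv : A u ((v :: m).formPerm v)) (hvu : A v ((u :: l).formPerm u)) :
    Mergeable A (u :: l) (v :: m) := by
  obtain ⟨hl, hpn, hpc⟩ := isDicycle_cons_iff.mp hp
  obtain ⟨hm, hqn, hqc⟩ := isDicycle_cons_iff.mp hq
  obtain ⟨y, l, rfl⟩ := List.exists_cons_of_ne_nil hl
  obtain ⟨z, m, rfl⟩ := List.exists_cons_of_ne_nil hm
  rw [List.formPerm_apply_head _ _ _ hqn] at huv
  rw [List.formPerm_apply_head _ _ _ hpn] at hvu
  refine ⟨u :: (z :: m ++ v :: y :: l), isDicycle_cons_iff.mpr ⟨by simp, ?_, ?_⟩,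
    fun w => by simp only [List.mem_cons, List.mem_append]; tauto⟩
  · have hperm : (u :: y :: l ++ v :: z :: m).Perm (u :: (z :: m ++ v :: y :: l)) :=
      (List.perm_append_comm.trans List.perm_middle.symm).cons u
    refine hperm.nodup_iff.mp (List.nodup_append.mpr ⟨hpn, hqn, ?_⟩)
    rintro a ha b hb rfl
    exact hdisj a ha hb
  · have hzv : (u :: z :: m ++ [v]).IsChain A :=
      List.isChain_cons_cons.mpr ⟨huv, (List.isChain_cons_cons.mp hqc).2⟩
    have hyu : (v :: y :: l ++ [u]).IsChain A :=
      List.isChain_cons_cons.mpr ⟨hvu, (List.isChain_cons_cons.mp hpc).2⟩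
    simpa using List.isChain_cons_split.mpr ⟨hzv, hyu⟩

theorem IsDicycle.mergeable_of_adj {p q : List V} (hp : IsDicycle A p) (hq : IsDicycle A q)
    (hdisj : ∀ x ∈ p, x ∉ q) {u v : V} (hu : u ∈ p) (hv : v ∈ q)
    (huv : A u (q.formPerm v)) (hvu : A v (p.formPerm u)) : Mergeable A p q := by
  obtain ⟨l, hl⟩ := List.exists_isRotated_cons hu
  obtain ⟨m, hm⟩ := List.exists_isRotated_cons hv
  rw [List.formPerm_eq_of_isRotated hq.2.1 hm] at huv
  rw [List.formPerm_eq_of_isRotated hp.2.1 hl] at hvu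
  refine (mergeable_cons_of_adj (hp.isRotated hl) (hq.isRotated hm) ?_ huv hvu).of_isRotated
    hl.symm hm.symm
  exact fun x hx hx' => hdisj x (hl.mem_iff.mpr hx) (hm.mem_iff.mpr hx')

end Dicycle

section Bipartite

variable [DecidableEq V] [Fintype V] {A : V → V → Prop} {V₁ V₂ : Finset V}

theorem IsBipartition.card_eq_add (h : IsBipartition A V₁ V₂) : Fintype.card V = #V₁ + #V₂ := by
  rw [← card_univ, ← h.2.1, card_union_of_disjoint h.1]

theorem IsBipartition.mem_iff_notMem_of_adj (h : IsBipartition A V₁ V₂) {x y : V}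
    (hxy : A x y) : x ∈ V₁ ↔ y ∉ V₁ := by
  obtain ⟨hd, hu, h₁, h₂⟩ := h
  have hside : ∀ z, z ∈ V₁ ∨ z ∈ V₂ := fun z => mem_union.mp (hu ▸ mem_univ z)
  rcases hside x with hx | hx <;> rcases hside y with hy | hy
  · exact absurd hxy (h₁ x hx y hy)
  · exact iff_of_true hx fun hy' => disjoint_left.mp hd hy' hy
  · exact iff_of_false (fun hx' => disjoint_left.mp hd hx' hx) (not_not.mpr hy)
  · exact absurd hxy (h₂ x hx y hy)

theorem IsBipartition.two_mul_card_filter_sameSide (h : IsBipartition A V₁ V₂) (P : Finset V)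
    {q : List V} (hq : IsDicycle A q) :
    2 * #((P ×ˢ q.toFinset).filter fun r => r.1 ∈ V₁ ↔ r.2 ∈ V₁) = #P * q.length := by
  have hτ : ∀ r : V × V, Equiv.prodCongr 1 q.formPerm r ∈ P ×ˢ q.toFinset ↔ r ∈ P ×ˢ q.toFinset :=
    by simp
  have hflip : #((P ×ˢ q.toFinset).filter fun r => r.1 ∈ V₁ ↔ r.2 ∈ V₁)
      = #((P ×ˢ q.toFinset).filter fun r => ¬ (r.1 ∈ V₁ ↔ r.2 ∈ V₁)) := by
    rw [← card_filter_comp_perm _ _ hτ]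
    refine congrArg card (filter_congr fun r hr => ?_)
    have hswap := h.mem_iff_notMem_of_adj (hq.adj_formPerm (by simpa using (mem_product.mp hr).2))
    simp only [Equiv.prodCongr_apply, Equiv.Perm.coe_one, Prod.map_fst, id_eq, Prod.map_snd]
    tauto
  rw [two_mul]
  nth_rewrite 2 [hflip]
  rw [card_filter_add_card_filter_not, card_product, List.toFinset_card_of_nodup hq.2.1]

theorem IsBipartition.two_mul_arcsBetween_le [DecidableRel A] (hbip : IsBipartition A V₁ V₂)
    {p q : List V} (hp : IsDicycle A p) (hq : IsDicycle A q) (hdisj : ∀ x ∈ p, x ∉ q)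
    (hnm : ¬ Mergeable A p q) :
    2 * arcsBetween A p.toFinset q.toFinset ≤ p.length * q.length := by
  set P := p.toFinset
  set Q := q.toFinset
  have hσ : ∀ r : V × V, Equiv.prodCongr p.formPerm 1 r ∈ P ×ˢ Q ↔ r ∈ P ×ˢ Q := by simp [P, Q]
  have hτ : ∀ r : V × V, Equiv.prodCongr 1 q.formPerm r ∈ P ×ˢ Q ↔ r ∈ P ×ˢ Q := by simp [P, Q]
  set F₁ := (P ×ˢ Q).filter fun r => A r.1 (q.formPerm r.2)
  set F₂ := (P ×ˢ Q).filter fun r => A r.2 (p.formPerm r.1)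
  have h₁ : #((P ×ˢ Q).filter fun r => A r.1 r.2) = #F₁ :=
    (card_filter_comp_perm _ _ hτ (fun r => A r.1 r.2)).symm
  have h₂ : #((Q ×ˢ P).filter fun r => A r.1 r.2) = #F₂ := by
    rw [← map_swap_product Q P, filter_map, card_map]
    exact (card_filter_comp_perm _ _ hσ (fun r => A r.2 r.1)).symm
  have hF : Disjoint F₁ F₂ := by
    refine disjoint_filter.mpr fun r hr huv hvu => hnm ?_
    obtain ⟨hu, hv⟩ := mem_product.mp hr
    exact hp.mergeable_of_adj hq hdisj (List.mem_toFinset.mp hu) (List.mem_toFinset.mp hv) huv hvu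
  have hFS : F₁ ∪ F₂ ⊆ (P ×ˢ Q).filter fun r => r.1 ∈ V₁ ↔ r.2 ∈ V₁ := by
    rw [← filter_or]
    intro r hr
    obtain ⟨hr, hadj⟩ := mem_filter.mp hr
    obtain ⟨hu, hv⟩ := mem_product.mp hr
    refine mem_filter.mpr ⟨hr, ?_⟩
    rcases hadj with huv | hvu
    · exact (hbip.mem_iff_notMem_of_adj huv).trans
        (hbip.mem_iff_notMem_of_adj (hq.adj_formPerm (List.mem_toFinset.mp hv))).symm
    · exact (hbip.mem_iff_notMem_of_adj (hp.adj_formPerm (List.mem_toFinset.mp hu))).trans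
        (hbip.mem_iff_notMem_of_adj hvu).symm
  calc 2 * arcsBetween A P Q = 2 * #(F₁ ∪ F₂) := by
        rw [arcsBetween, h₁, h₂, card_union_of_disjoint hF]
    _ ≤ 2 * #((P ×ˢ Q).filter fun r => r.1 ∈ V₁ ↔ r.2 ∈ V₁) := by gcongr
    _ = p.length * q.length := by
        rw [hbip.two_mul_card_filter_sameSide P hq, List.toFinset_card_of_nodup hp.2.1]

end Bipartite

theorem arcsBetween_eq_sum_degIn (A : V → V → Prop) [DecidableRel A] (X Y : Finset V) :
    arcsBetween A X Y = ∑ y ∈ Y, degIn A X y := by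
  rw [arcsBetween, card_filter, card_filter, sum_product_right, sum_product, add_comm,
    ← sum_add_distrib]
  simp only [degIn, card_filter]

theorem arcsBetween_biUnion {ι : Type*} [DecidableEq V] (A : V → V → Prop) [DecidableRel A]
    (X : Finset V) {s : Finset ι} {f : ι → Finset V} (hf : (s : Set ι).PairwiseDisjoint f) :
    arcsBetween A X (s.biUnion f) = ∑ i ∈ s, arcsBetween A X (f i) := by
  simp only [arcsBetween_eq_sum_degIn, sum_biUnion hf]

section CycleFactor

variable [DecidableEq V] [Fintype V] {L : List (List V)}
  (hdisj : L.Pairwise fun c d => ∀ x ∈ c, x ∉ d) (hcover : ∀ v, ∃ c ∈ L, v ∈ c)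
include hdisj hcover

theorem sum_length_eq_card (hnodup : ∀ c ∈ L, c.Nodup) :
    ∑ c ∈ L.toFinset, c.length = Fintype.card V := by
  have hunion : L.toFinset.biUnion List.toFinset = univ :=
    eq_univ_of_forall fun v => by simpa using hcover v
  rw [← card_univ, ← hunion, card_biUnion hdisj.pairwiseDisjoint_toFinset]
  exact sum_congr rfl fun c hc => (List.toFinset_card_of_nodup (hnodup c (by simpa using hc))).symm

theorem compl_toFinset_eq_biUnion {c : List V} (hc : c ∈ L) :
    univ \ c.toFinset = (L.toFinset.erase c).biUnion List.toFinset := by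
  ext v
  simp only [mem_sdiff, mem_univ, true_and, List.mem_toFinset, mem_biUnion, mem_erase]
  constructor
  · intro hv
    obtain ⟨d, hd, hvd⟩ := hcover v
    exact ⟨d, ⟨fun h => hv (h ▸ hvd), hd⟩, hvd⟩
  · rintro ⟨d, ⟨hne, hd⟩, hvd⟩ hv
    exact hdisj.notMem_of_ne hc hd hne.symm hv hvd

end CycleFactor

theorem stmt19_general {V : Type*} [DecidableEq V] [Fintype V] (A : V → V → Prop) [DecidableRel A]
    (V₁ V₂ : Finset V) (a : ℕ)
    (hbip : IsBipartition A V₁ V₂) (h1 : V₁.card = a) (h2 : V₂.card = a)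
    (L : List (List V))
    (hcyc : ∀ c ∈ L, IsDicycle A c)
    (hdisj : L.Pairwise (fun c d => ∀ x ∈ c, x ∉ d))
    (hcover : ∀ v, ∃ c ∈ L, v ∈ c)
    (hnomerge : ∀ c ∈ L, ∀ d ∈ L, c ≠ d →
      ¬ ∃ e : List V, IsDicycle A e ∧ ∀ v, v ∈ e ↔ v ∈ c ∨ v ∈ d)
    (c₁ : List V) (hc₁ : c₁ ∈ L) :
    2 * arcsBetween A c₁.toFinset (Finset.univ \ c₁.toFinset)
      ≤ c₁.length * (2 * a - c₁.length) := by
  have hrest : ∑ d ∈ L.toFinset.erase c₁, d.length = 2 * a - c₁.length := by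
    have htotal := sum_length_eq_card hdisj hcover fun c hc => (hcyc c hc).2.1
    rw [hbip.card_eq_add, h1, h2, ← add_sum_erase _ _ (List.mem_toFinset.mpr hc₁)] at htotal
    omega
  have hpair : ∀ d ∈ L.toFinset.erase c₁,
      2 * arcsBetween A c₁.toFinset d.toFinset ≤ c₁.length * d.length := by
    intro d hd
    rw [mem_erase, List.mem_toFinset] at hd
    obtain ⟨hne, hd⟩ := hd
    exact hbip.two_mul_arcsBetween_le (hcyc c₁ hc₁) (hcyc d hd)
      (fun x => hdisj.notMem_of_ne hc₁ hd hne.symm) (hnomerge c₁ hc₁ d hd hne.symm)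
  rw [compl_toFinset_eq_biUnion hdisj hcover hc₁,
    arcsBetween_biUnion A _ (hdisj.pairwiseDisjoint_toFinset.subset (erase_subset _ _)),
    mul_sum, ← hrest, mul_sum]
  exact sum_le_sum hpair

theorem stmt19 {V : Type*} [DecidableEq V] [Fintype V] (A : V → V → Prop) [DecidableRel A]
    (V₁ V₂ : Finset V) (a : ℕ)
    (hbip : IsBipartition A V₁ V₂) (h1 : V₁.card = a) (h2 : V₂.card = a)
    (L : List (List V)) (hs : 2 ≤ L.length)
    (hcyc : ∀ c ∈ L, IsDicycle A c)
    (hdisj : L.Pairwise (fun c d => ∀ x ∈ c, x ∉ d))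
    (hcover : ∀ v, ∃ c ∈ L, v ∈ c)
    (hnomerge : ∀ c ∈ L, ∀ d ∈ L, c ≠ d →
      ¬ ∃ e : List V, IsDicycle A e ∧ ∀ v, v ∈ e ↔ v ∈ c ∨ v ∈ d)
    (c₁ : List V) (hc₁ : c₁ ∈ L) (hshort : ∀ c ∈ L, c₁.length ≤ c.length) :
    2 * arcsBetween A c₁.toFinset (Finset.univ \ c₁.toFinset)
      ≤ c₁.length * (2 * a - c₁.length) :=
  stmt19_general A V₁ V₂ a hbip h1 h2 L hcyc hdisj hcover hnomerge c₁ hc₁
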